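/- Let M be a finite monoid satisfying (xy)^ω y (xy)^ω = (xy)^ω for all x, y ∈ M (where ω is the idempotent power of M), and let μ : A* → M be a monoid homomorphism. Then for all words u, v ∈ A* with alph(u) ⊆ alph(v), one has μ(v)^ω · μ(u) · μ(v)^ω = μ(v)^ω. -/

import Mathlib

/-!
Write `e = μ(v)^ω`. In DA, whenever `e (yz) e = e` also `e y e = e`, and the elements `m` with
`e m e = e` are closed under products. For a letter `a` of `v`, write `v = p a q`; the identity
gives `e (μ(a) μ(q)) e = e`, hence `e μ(a) e = e`. As `μ(u)` is a product of such `μ(a)`, `e` absorbs it.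
-/

/-- The identity `(xy)^ω y (xy)^ω = (xy)^ω` of DA, read on products `xy` that are idempotent. -/
def IsDA (M : Type*) [Monoid M] : Prop :=
  ∀ x y : M, IsIdempotentElem (x * y) → x * y * y * (x * y) = x * y

section IsDA

variable {M : Type*} [Monoid M]

theorem isDA_of_pow_identity {ω : ℕ}
    (hDA : ∀ x y : M, (x * y) ^ ω * y * (x * y) ^ ω = (x * y) ^ ω) : IsDA M := by
  intro x y hxy
  rcases Nat.eq_zero_or_pos ω with rfl | hpos
  · have eq_one (z : M) : z = 1 := by simpa using hDA 1 z
    simp [eq_one x, eq_one y]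
  · simpa [hxy.pow_eq hpos.ne'] using hDA x y

theorem IsDA.absorbs_left_of_absorbs_mul (hM : IsDA M) {e y z : M}
    (h : e * (y * z) * e = e) : e * y * e = e := by
  have hab : e * y * (z * e) = e := by simpa only [mul_assoc] using h
  set f := z * (e * y) with hf
  have hf_idem : IsIdempotentElem f := by
    rw [IsIdempotentElem, hf, mul_assoc, ← mul_assoc (e * y) z, ← mul_assoc (e * y * z),
      mul_assoc (e * y) z, hab]
  have hfaf : f * (e * y) * f = f := hM z (e * y) hf_idem
  have hfb : f * (z * e) = z * e := by
    rw [hf, mul_assoc, ← mul_assoc (e * y), mul_assoc (e * y), hab]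
  calc e * y * e = e * y * (z * e) * y * (e * y * (z * e)) := by rw [hab]
  _ = e * y * (f * (e * y) * (f * (z * e))) := by rw [hfb, hf]; simp only [mul_assoc]
  _ = e * y * (f * (z * e)) := by rw [← mul_assoc (f * (e * y)) f, hfaf]
  _ = e := by rw [hfb, hab]

theorem IsDA.absorbs_mul (hM : IsDA M) {e m c : M}
    (hm : e * m * e = e) (hc : e * c * e = e) : e * (m * c) * e = e := by
  -- `e m = e (c e m)` is idempotent, so the identity applies to it with right factor `c e m`.
  have hcem : e * (c * e * m) = e * m := by rw [← mul_assoc, ← mul_assoc, hc]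
  have hf_idem : IsIdempotentElem (e * (c * e * m)) := by
    rw [hcem, IsIdempotentElem, ← mul_assoc, hm]
  have hfyf := hM e (c * e * m) hf_idem
  rw [hcem] at hfyf
  have hm' : e * (m * e) = e := by rw [← mul_assoc, hm]
  calc e * (m * c) * e = e * m * (c * e * m) * (e * m) * e := by simp only [mul_assoc, hm']
  _ = e := by rw [hfyf, hm]

def IsDA.absorbedSubmonoid (hM : IsDA M) {e : M} (he : IsIdempotentElem e) : Submonoid M where
  carrier := {m | e * m * e = e}
  one_mem' := by simpa using he.eq
  mul_mem' := hM.absorbs_mul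

end IsDA

theorem pow_mul_mul_absorbs_middle {M : Type*} [Monoid M] {ω : ℕ}
    (hDA : ∀ x y : M, (x * y) ^ ω * y * (x * y) ^ ω = (x * y) ^ ω) (x y z : M) :
    (x * (y * z)) ^ ω * y * (x * (y * z)) ^ ω = (x * (y * z)) ^ ω :=
  (isDA_of_pow_identity hDA).absorbs_left_of_absorbs_mul (hDA x (y * z))

theorem FreeMonoid.map_mem_of_forall_mem_toList {A M : Type*} [Monoid M] (μ : FreeMonoid A →* M)
    (S : Submonoid M) {u : FreeMonoid A} (h : ∀ a ∈ u.toList, μ (of a) ∈ S) : μ u ∈ S := by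
  rw [← lift_restrict μ, lift_apply]
  exact S.list_prod_mem (by simpa using h)

theorem DA_absorbs_subalphabet_words_general {A M : Type*} [Monoid M]
    (ω : ℕ) (hω : ∀ s : M, s ^ ω * s ^ ω = s ^ ω)
    (hDA : ∀ x y : M, (x * y) ^ ω * y * (x * y) ^ ω = (x * y) ^ ω)
    (μ : FreeMonoid A →* M) (u v : FreeMonoid A)
    (halph : ∀ a : A, a ∈ FreeMonoid.toList u → a ∈ FreeMonoid.toList v) :
    μ v ^ ω * μ u * μ v ^ ω = μ v ^ ω := by
  let S := (isDA_of_pow_identity hDA).absorbedSubmonoid (hω (μ v))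
  refine FreeMonoid.map_mem_of_forall_mem_toList μ S fun a ha ↦ ?_
  obtain ⟨p, q, hpq⟩ := List.append_of_mem (halph a ha)
  have hv : μ v = μ (.ofList p) * (μ (.of a) * μ (.ofList q)) := by
    rw [← map_mul, ← map_mul, ← FreeMonoid.ofList_cons, ← FreeMonoid.ofList_append, ← hpq,
      FreeMonoid.ofList_toList]
  show μ v ^ ω * μ (.of a) * μ v ^ ω = μ v ^ ω
  rw [hv]
  exact pow_mul_mul_absorbs_middle hDA _ _ _

theorem DA_absorbs_subalphabet_words {A M : Type*} [Monoid M] [Finite M]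
    (ω : ℕ) (hω : ∀ s : M, s ^ ω * s ^ ω = s ^ ω)
    (hDA : ∀ x y : M, (x * y) ^ ω * y * (x * y) ^ ω = (x * y) ^ ω)
    (μ : FreeMonoid A →* M) (u v : FreeMonoid A)
    (halph : ∀ a : A, a ∈ FreeMonoid.toList u → a ∈ FreeMonoid.toList v) :
    μ v ^ ω * μ u * μ v ^ ω = μ v ^ ω :=
  DA_absorbs_subalphabet_words_general ω hω hDA μ u v halph
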